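/- Let 1 < p < 2 and u_p(x) := -sin_p(π_p x)^{p-1} cos_p(π_p x)^{2-p} for x ∈ [0, 1/2]. Then u_p(x) = 0 if and only if x = 0 or x = 1/2, and min_{x ∈ [0,1/2]} u_p(x) = -c_p, where c_p = (p-1)^{(p-1)/p} (2-p)^{(2-p)/p}; moreover the minimum is attained exactly at the unique point m_p ∈ (0, 1/2) with cos_p(π_p m_p)^p = 2 - p. -/

import Mathlib

open Real Set

noncomputable def Fp (p y : ℝ) : ℝ := ∫ t in (0:ℝ)..y, (1 - t ^ p) ^ (-(1/p))

noncomputable def pip (p : ℝ) : ℝ := 2 * Fp p 1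

/-- `c_p = (p-1)^{(p-1)/p} (2-p)^{(2-p)/p}`. -/
noncomputable def cp (p : ℝ) : ℝ := (p - 1) ^ ((p - 1) / p) * (2 - p) ^ ((2 - p) / p)

/-!
Write `a = sin_p ^ p`, so that `cos_p ^ p = 1 - a` and `-u_p = (a ^ (p-1) (1-a) ^ (2-p)) ^ (1/p)`.
Weighted AM-GM with weights `p - 1` and `2 - p` bounds `a ^ (p-1) (1-a) ^ (2-p)` by
`(p-1) ^ (p-1) (2-p) ^ (2-p) = c_p ^ p`, with equality exactly at `a = p - 1`, i.e. at
`cos_p ^ p = 2 - p`; the profile vanishes exactly at `a = 0` and `a = 1`. Since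
`x ↦ sin_p (π_p x)` maps `[0, 1/2]` bijectively onto `[0, 1]`, all of this transfers to `x`.
At `x = 1/2` the derivative of `F_p` blows up, so `cos_p (π_p / 2) = 0` comes from a slope
estimate rather than from the inverse function theorem.
-/

open MeasureTheory Filter Topology

section LeftInverse

variable {F s : ℝ → ℝ} {a b : ℝ}

theorem Set.LeftInvOn.rightInvOn_Icc_of_monotoneOn (hs : LeftInvOn s F (Icc a b)) (hab : a ≤ b)
    (hF : MonotoneOn F (Icc a b)) (hFc : ContinuousOn F (Icc a b)) :
    RightInvOn s F (Icc (F a) (F b)) := by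
  rw [← hFc.image_Icc_of_monotoneOn hab hF]
  exact hs.rightInvOn_image

theorem Set.LeftInvOn.bijOn_Icc_of_strictMonoOn (hs : LeftInvOn s F (Icc a b)) (hab : a ≤ b)
    (hF : StrictMonoOn F (Icc a b)) (hFc : ContinuousOn F (Icc a b)) :
    BijOn s (Icc (F a) (F b)) (Icc a b) := by
  rw [← hFc.image_Icc_of_monotoneOn hab hF.monotoneOn]
  exact hF.injOn.bijOn_image.symm ⟨hs.rightInvOn_image, hs⟩

theorem Set.LeftInvOn.strictMonoOn_Icc (hs : LeftInvOn s F (Icc a b)) (hab : a ≤ b)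
    (hF : StrictMonoOn F (Icc a b)) (hFc : ContinuousOn F (Icc a b)) :
    StrictMonoOn s (Icc (F a) (F b)) := by
  have hmaps := (hs.bijOn_Icc_of_strictMonoOn hab hF hFc).mapsTo
  have hright := hs.rightInvOn_Icc_of_monotoneOn hab hF.monotoneOn hFc
  intro x hx y hy hxy
  refine lt_of_not_ge fun hyx => hxy.not_ge ?_
  simpa only [hright hx, hright hy] using hF.monotoneOn (hmaps hy) (hmaps hx) hyx

theorem Set.LeftInvOn.mapsTo_Ioo (hs : LeftInvOn s F (Icc a b)) (hab : a ≤ b)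
    (hF : StrictMonoOn F (Icc a b)) (hFc : ContinuousOn F (Icc a b)) :
    MapsTo s (Ioo (F a) (F b)) (Ioo a b) := by
  intro x hx
  have hmono := hs.strictMonoOn_Icc hab hF hFc
  have hFab : F a ≤ F b := hF.monotoneOn (left_mem_Icc.2 hab) (right_mem_Icc.2 hab) hab
  have h₁ := hmono (left_mem_Icc.2 hFab) (Ioo_subset_Icc_self hx) hx.1
  have h₂ := hmono (Ioo_subset_Icc_self hx) (right_mem_Icc.2 hFab) hx.2
  rw [hs (left_mem_Icc.2 hab)] at h₁
  rw [hs (right_mem_Icc.2 hab)] at h₂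
  exact ⟨h₁, h₂⟩

theorem Set.LeftInvOn.continuousAt_of_mem_Ioo (hs : LeftInvOn s F (Icc a b)) (hab : a ≤ b)
    (hF : StrictMonoOn F (Icc a b)) (hFc : ContinuousOn F (Icc a b)) {x : ℝ}
    (hx : x ∈ Ioo (F a) (F b)) : ContinuousAt s x := by
  refine (hs.strictMonoOn_Icc hab hF hFc).continuousAt_of_image_mem_nhds
    (Icc_mem_nhds hx.1 hx.2) ?_
  obtain ⟨h₁, h₂⟩ := hs.mapsTo_Ioo hab hF hFc hx
  rw [(hs.bijOn_Icc_of_strictMonoOn hab hF hFc).image_eq]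
  exact Icc_mem_nhds h₁ h₂

theorem Set.LeftInvOn.continuousWithinAt_Iic_right (hs : LeftInvOn s F (Icc a b)) (hab : a < b)
    (hF : StrictMonoOn F (Icc a b)) (hFc : ContinuousOn F (Icc a b)) :
    ContinuousWithinAt s (Iic (F b)) (F b) := by
  have hFab : F a < F b := hF (left_mem_Icc.2 hab.le) (right_mem_Icc.2 hab.le) hab
  refine (hs.strictMonoOn_Icc hab.le hF hFc).continuousWithinAt_left_of_image_mem_nhdsWithin
    (Icc_mem_nhdsLE hFab) ?_
  rw [(hs.bijOn_Icc_of_strictMonoOn hab.le hF hFc).image_eq, hs (right_mem_Icc.2 hab.le)]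
  exact Icc_mem_nhdsLE hab

theorem Set.LeftInvOn.hasDerivAt_of_mem_Ioo (hs : LeftInvOn s F (Icc a b)) (hab : a ≤ b)
    (hF : StrictMonoOn F (Icc a b)) (hFc : ContinuousOn F (Icc a b)) {x F' : ℝ}
    (hx : x ∈ Ioo (F a) (F b)) (hF' : HasDerivAt F F' (s x)) (hF'0 : F' ≠ 0) :
    HasDerivAt s F'⁻¹ x := by
  refine hF'.of_local_left_inverse (hs.continuousAt_of_mem_Ioo hab hF hFc hx) hF'0 ?_
  filter_upwards [Icc_mem_nhds hx.1 hx.2] with y hy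
  exact hs.rightInvOn_Icc_of_monotoneOn hab hF.monotoneOn hFc hy

end LeftInverse

theorem deriv_eq_zero_of_hasDerivWithinAt_Iic {f : ℝ → ℝ} {x : ℝ}
    (h : HasDerivWithinAt f 0 (Iic x) x) : deriv f x = 0 := by
  by_cases hd : DifferentiableAt ℝ f x
  · rw [← hd.derivWithin (uniqueDiffWithinAt_Iic x), h.derivWithin (uniqueDiffWithinAt_Iic x)]
  · exact deriv_zero_of_not_differentiableAt hd

section WeightedAMGM

variable {w₁ w₂ a : ℝ}

theorem rpow_mul_one_sub_rpow_eq (hw₁ : 0 < w₁) (hw₂ : 0 < w₂) (ha : a ∈ Icc (0:ℝ) 1) :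
    a ^ w₁ * (1 - a) ^ w₂ =
      w₁ ^ w₁ * w₂ ^ w₂ * ((a / w₁) ^ w₁ * ((1 - a) / w₂) ^ w₂) := by
  have h₁ : a ^ w₁ = w₁ ^ w₁ * (a / w₁) ^ w₁ := by
    rw [← Real.mul_rpow hw₁.le (div_nonneg ha.1 hw₁.le), mul_div_cancel₀ _ hw₁.ne']
  have h₂ : (1 - a) ^ w₂ = w₂ ^ w₂ * ((1 - a) / w₂) ^ w₂ := by
    rw [← Real.mul_rpow hw₂.le (div_nonneg (sub_nonneg.2 ha.2) hw₂.le),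
      mul_div_cancel₀ _ hw₂.ne']
  rw [h₁, h₂]
  ring

theorem rpow_mul_one_sub_rpow_le (hw₁ : 0 < w₁) (hw₂ : 0 < w₂) (hw : w₁ + w₂ = 1)
    (ha : a ∈ Icc (0:ℝ) 1) : a ^ w₁ * (1 - a) ^ w₂ ≤ w₁ ^ w₁ * w₂ ^ w₂ := by
  have hmean : w₁ * (a / w₁) + w₂ * ((1 - a) / w₂) = 1 := by
    rw [mul_div_cancel₀ _ hw₁.ne', mul_div_cancel₀ _ hw₂.ne', add_sub_cancel]
  rw [rpow_mul_one_sub_rpow_eq hw₁ hw₂ ha]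
  refine mul_le_of_le_one_right (by positivity) ?_
  exact (Real.geom_mean_le_arith_mean2_weighted hw₁.le hw₂.le (div_nonneg ha.1 hw₁.le)
    (div_nonneg (sub_nonneg.2 ha.2) hw₂.le) hw).trans_eq hmean

theorem rpow_mul_one_sub_rpow_eq_iff (hw₁ : 0 < w₁) (hw₂ : 0 < w₂) (hw : w₁ + w₂ = 1)
    (ha : a ∈ Icc (0:ℝ) 1) :
    a ^ w₁ * (1 - a) ^ w₂ = w₁ ^ w₁ * w₂ ^ w₂ ↔ a = w₁ := by
  have hmean : w₁ * (a / w₁) + w₂ * ((1 - a) / w₂) = 1 := by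
    rw [mul_div_cancel₀ _ hw₁.ne', mul_div_cancel₀ _ hw₂.ne', add_sub_cancel]
  have hamgm := Real.geom_mean_eq_arith_mean2_weighted_iff_of_pos hw₁ hw₂
    (div_nonneg ha.1 hw₁.le) (div_nonneg (sub_nonneg.2 ha.2) hw₂.le) hw
  rw [hmean] at hamgm
  rw [rpow_mul_one_sub_rpow_eq hw₁ hw₂ ha, mul_eq_left₀ (by positivity), hamgm,
    div_eq_div_iff hw₁.ne' hw₂.ne']
  constructor <;> intro h <;> nlinarith

end WeightedAMGM

noncomputable def FpIntegrand (p t : ℝ) : ℝ := (1 - t ^ p) ^ (-(1 / p))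

@[simp]
theorem Fp_zero (p : ℝ) : Fp p 0 = 0 := intervalIntegral.integral_same

section FpIntegrand

variable {p t : ℝ}

theorem one_sub_rpow_pos (hp : 0 < p) (ht₀ : 0 ≤ t) (ht₁ : t < 1) : 0 < 1 - t ^ p :=
  sub_pos.2 (Real.rpow_lt_one ht₀ ht₁ hp)

theorem FpIntegrand_eq_inv (hp : 0 ≤ p) (ht₀ : 0 ≤ t) (ht₁ : t ≤ 1) :
    FpIntegrand p t = ((1 - t ^ p) ^ (1 / p))⁻¹ :=
  Real.rpow_neg (sub_nonneg.2 (Real.rpow_le_one ht₀ ht₁ hp)) _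

theorem FpIntegrand_pos (hp : 0 < p) (ht₀ : 0 ≤ t) (ht₁ : t < 1) : 0 < FpIntegrand p t :=
  Real.rpow_pos_of_pos (one_sub_rpow_pos hp ht₀ ht₁) _

theorem continuousAt_FpIntegrand (hp : 0 < p) (ht₀ : 0 ≤ t) (ht₁ : t < 1) :
    ContinuousAt (FpIntegrand p) t :=
  (continuousAt_const.sub (Real.continuousAt_rpow_const t p (Or.inr hp.le))).rpow_const
    (Or.inl (one_sub_rpow_pos hp ht₀ ht₁).ne')

theorem measurable_FpIntegrand : Measurable (FpIntegrand p) := by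
  unfold FpIntegrand; fun_prop

theorem monotoneOn_FpIntegrand (hp : 0 < p) : MonotoneOn (FpIntegrand p) (Ico 0 1) :=
  fun _ ha _ hb hab => Real.rpow_le_rpow_of_nonpos (one_sub_rpow_pos hp hb.1 hb.2)
    (sub_le_sub_left (Real.rpow_le_rpow ha.1 hab hp.le) 1) (neg_nonpos.2 (by positivity))

/-- The singularity at `t = 1` is integrable because `1 - t ^ p ≥ 1 - t` and `1 / p < 1`. -/
theorem intervalIntegrable_FpIntegrand (hp : 1 < p) :
    IntervalIntegrable (FpIntegrand p) volume 0 1 := by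
  have hp₀ : 0 < p := zero_lt_one.trans hp
  have hdom : IntervalIntegrable (fun t : ℝ => (1 - t) ^ (-(1 / p))) volume 0 1 := by
    have h := (intervalIntegral.intervalIntegrable_rpow' (a := 0) (b := 1) (r := -(1 / p))
      (by rw [neg_lt_neg_iff, div_lt_one hp₀]; exact hp)).comp_sub_left 1
    simpa using h.symm
  refine hdom.mono_fun measurable_FpIntegrand.aestronglyMeasurable ?_
  rw [uIoc_of_le zero_le_one]
  filter_upwards [ae_restrict_mem measurableSet_Ioc] with t ht
  have hbase : 0 ≤ 1 - t ^ p := sub_nonneg.2 (Real.rpow_le_one ht.1.le ht.2 hp₀.le)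
  unfold FpIntegrand
  rw [Real.norm_of_nonneg (Real.rpow_nonneg hbase _),
    Real.norm_of_nonneg (Real.rpow_nonneg (sub_nonneg.2 ht.2) _)]
  rcases ht.2.eq_or_lt with rfl | ht₁
  · simp
  · refine Real.rpow_le_rpow_of_nonpos (sub_pos.2 ht₁) ?_ (neg_nonpos.2 (by positivity))
    have := Real.rpow_le_rpow_of_exponent_ge ht.1 ht.2 hp.le
    rw [Real.rpow_one] at this
    linarith

theorem intervalIntegrable_FpIntegrand_of_mem (hp : 1 < p) {a b : ℝ} (ha : a ∈ Icc (0:ℝ) 1)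
    (hb : b ∈ Icc (0:ℝ) 1) : IntervalIntegrable (FpIntegrand p) volume a b :=
  (intervalIntegrable_FpIntegrand hp).mono_set <| by
    rw [uIcc_of_le zero_le_one]; exact uIcc_subset_Icc ha hb

end FpIntegrand

section Fp

variable {p : ℝ}

theorem Fp_sub_Fp (hp : 1 < p) {a b : ℝ} (ha : a ∈ Icc (0:ℝ) 1) (hb : b ∈ Icc (0:ℝ) 1) :
    Fp p b - Fp p a = ∫ t in a..b, FpIntegrand p t :=
  intervalIntegral.integral_interval_sub_left
    (intervalIntegrable_FpIntegrand_of_mem hp (left_mem_Icc.2 zero_le_one) hb)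
    (intervalIntegrable_FpIntegrand_of_mem hp (left_mem_Icc.2 zero_le_one) ha)

theorem strictMonoOn_Fp (hp : 1 < p) : StrictMonoOn (Fp p) (Icc 0 1) := by
  intro a ha b hb hab
  have hpos : 0 < ∫ t in a..b, FpIntegrand p t :=
    intervalIntegral.intervalIntegral_pos_of_pos_on (intervalIntegrable_FpIntegrand_of_mem hp ha hb)
      (fun t ht => FpIntegrand_pos (zero_lt_one.trans hp) (ha.1.trans ht.1.le)
        (ht.2.trans_le hb.2)) hab
  linarith [Fp_sub_Fp hp ha hb]

theorem continuousOn_Fp (hp : 1 < p) : ContinuousOn (Fp p) (Icc 0 1) := by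
  have h := intervalIntegral.continuousOn_primitive_interval'
    (intervalIntegrable_FpIntegrand hp) left_mem_uIcc
  rwa [uIcc_of_le zero_le_one] at h

theorem hasDerivAt_Fp (hp : 1 < p) {y : ℝ} (hy₀ : 0 ≤ y) (hy₁ : y < 1) :
    HasDerivAt (Fp p) (FpIntegrand p y) y :=
  intervalIntegral.integral_hasDerivAt_right
    (intervalIntegrable_FpIntegrand_of_mem hp (left_mem_Icc.2 zero_le_one) ⟨hy₀, hy₁.le⟩)
    measurable_FpIntegrand.aestronglyMeasurable.stronglyMeasurableAtFilter
    (continuousAt_FpIntegrand (zero_lt_one.trans hp) hy₀ hy₁)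

theorem one_sub_mul_FpIntegrand_le (hp : 1 < p) {y : ℝ} (hy₀ : 0 ≤ y) (hy₁ : y < 1) :
    (1 - y) * FpIntegrand p y ≤ Fp p 1 - Fp p y := by
  have hy : y ∈ Icc (0:ℝ) 1 := ⟨hy₀, hy₁.le⟩
  rw [Fp_sub_Fp hp hy (right_mem_Icc.2 zero_le_one)]
  calc (1 - y) * FpIntegrand p y = ∫ _ in y..1, FpIntegrand p y := by simp
    _ ≤ ∫ t in y..1, FpIntegrand p t :=
      intervalIntegral.integral_mono_on_of_le_Ioo hy₁.le intervalIntegrable_const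
        (intervalIntegrable_FpIntegrand_of_mem hp hy (right_mem_Icc.2 zero_le_one))
        fun t ht => monotoneOn_FpIntegrand (zero_lt_one.trans hp) ⟨hy₀, hy₁⟩
          ⟨hy₀.trans ht.1.le, ht.2⟩ ht.1.le

theorem Fp_one_pos (hp : 1 < p) : 0 < Fp p 1 := by
  simpa using strictMonoOn_Fp hp (left_mem_Icc.2 zero_le_one) (right_mem_Icc.2 zero_le_one)
    zero_lt_one

theorem pip_mul_one_half (p : ℝ) : pip p * (1 / 2) = Fp p 1 := by
  rw [pip]; ring

theorem pip_pos (hp : 1 < p) : 0 < pip p :=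
  mul_pos two_pos (Fp_one_pos hp)

theorem pip_mul_mem_Ioo (hp : 1 < p) {x : ℝ} (hx : x ∈ Ioo (0:ℝ) (1 / 2)) :
    pip p * x ∈ Ioo 0 (Fp p 1) := by
  have hpip := pip_pos hp
  exact ⟨mul_pos hpip hx.1, pip_mul_one_half p ▸ mul_lt_mul_of_pos_left hx.2 hpip⟩

theorem bijOn_pip_mul (hp : 1 < p) : BijOn (pip p * ·) (Icc 0 (1 / 2)) (Icc 0 (Fp p 1)) := by
  have hpip := pip_pos hp
  have h := (mul_right_injective₀ hpip.ne').injOn.bijOn_image (s := Icc (0:ℝ) (1 / 2))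
  rwa [image_mul_left_Icc hpip.le (by norm_num), mul_zero, pip_mul_one_half] at h

end Fp

section Sinp

variable {p : ℝ} {s : ℝ → ℝ}

theorem sinp_zero (hs : LeftInvOn s (Fp p) (Icc 0 1)) : s 0 = 0 := by
  simpa using hs (left_mem_Icc.2 zero_le_one)

theorem sinp_Fp_one (hs : LeftInvOn s (Fp p) (Icc 0 1)) : s (Fp p 1) = 1 :=
  hs (right_mem_Icc.2 zero_le_one)

theorem sinp_mem_Ioo (hp : 1 < p) (hs : LeftInvOn s (Fp p) (Icc 0 1)) {θ : ℝ}
    (hθ : θ ∈ Ioo 0 (Fp p 1)) : s θ ∈ Ioo 0 1 :=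
  hs.mapsTo_Ioo zero_le_one (strictMonoOn_Fp hp) (continuousOn_Fp hp) (by rwa [Fp_zero])

theorem hasDerivAt_sinp (hp : 1 < p) (hs : LeftInvOn s (Fp p) (Icc 0 1)) {θ : ℝ}
    (hθ : θ ∈ Ioo 0 (Fp p 1)) : HasDerivAt s ((1 - s θ ^ p) ^ (1 / p)) θ := by
  obtain ⟨hy₀, hy₁⟩ := sinp_mem_Ioo hp hs hθ
  have h := hs.hasDerivAt_of_mem_Ioo zero_le_one (strictMonoOn_Fp hp) (continuousOn_Fp hp)
    (by rwa [Fp_zero]) (hasDerivAt_Fp hp hy₀.le hy₁)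
    (FpIntegrand_pos (zero_lt_one.trans hp) hy₀.le hy₁).ne'
  rwa [FpIntegrand_eq_inv (zero_le_one.trans hp.le) hy₀.le hy₁.le, inv_inv] at h

/-- `F_p 1 - θ = ∫_{s θ}^1 F_p' ≥ (1 - s θ) F_p'(s θ)` since `F_p'` is increasing, and
`F_p'(s θ)⁻¹ = cos_p θ`. -/
theorem slope_sinp_Fp_one_le (hp : 1 < p) (hs : LeftInvOn s (Fp p) (Icc 0 1)) {θ : ℝ}
    (hθ : θ ∈ Ioo 0 (Fp p 1)) :
    0 ≤ slope s (Fp p 1) θ ∧ slope s (Fp p 1) θ ≤ (1 - s θ ^ p) ^ (1 / p) := by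
  obtain ⟨hy₀, hy₁⟩ := sinp_mem_Ioo hp hs hθ
  have hFs : Fp p (s θ) = θ := hs.rightInvOn_Icc_of_monotoneOn zero_le_one
    (strictMonoOn_Fp hp).monotoneOn (continuousOn_Fp hp)
    (by rw [Fp_zero]; exact Ioo_subset_Icc_self hθ)
  have hgap : 0 < Fp p 1 - θ := sub_pos.2 hθ.2
  have hslope : slope s (Fp p 1) θ = (1 - s θ) / (Fp p 1 - θ) := by
    rw [slope_def_field, sinp_Fp_one hs, ← neg_div_neg_eq, neg_sub, neg_sub]
  rw [hslope, ← inv_inv ((1 - s θ ^ p) ^ (1 / p)),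
    ← FpIntegrand_eq_inv (zero_le_one.trans hp.le) hy₀.le hy₁.le]
  refine ⟨div_nonneg (sub_nonneg.2 hy₁.le) hgap.le, ?_⟩
  rw [div_le_iff₀ hgap, le_inv_mul_iff₀ (FpIntegrand_pos (zero_lt_one.trans hp) hy₀.le hy₁),
    mul_comm]
  simpa only [hFs] using one_sub_mul_FpIntegrand_le hp hy₀.le hy₁

theorem tendsto_cosp_Fp_one (hp : 1 < p) (hs : LeftInvOn s (Fp p) (Icc 0 1)) :
    Tendsto (fun θ => (1 - s θ ^ p) ^ (1 / p)) (𝓝[<] Fp p 1) (𝓝 0) := by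
  have hp₀ : 0 < p := zero_lt_one.trans hp
  have hcont : ContinuousAt (fun y : ℝ => (1 - y ^ p) ^ (1 / p)) 1 :=
    (continuousAt_const.sub (Real.continuousAt_rpow_const 1 p (Or.inr hp₀.le))).rpow_const
      (Or.inr (by positivity))
  have hs₁ : Tendsto s (𝓝[<] Fp p 1) (𝓝 1) := by
    have h := hs.continuousWithinAt_Iic_right zero_lt_one (strictMonoOn_Fp hp) (continuousOn_Fp hp)
    rw [ContinuousWithinAt, sinp_Fp_one hs] at h
    exact h.mono_left (nhdsWithin_mono _ Iio_subset_Iic_self)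
  have h := hcont.tendsto.comp hs₁
  rwa [Real.one_rpow, sub_self, Real.zero_rpow (one_div_pos.2 hp₀).ne'] at h

theorem deriv_sinp_Fp_one (hp : 1 < p) (hs : LeftInvOn s (Fp p) (Icc 0 1)) :
    deriv s (Fp p 1) = 0 := by
  refine deriv_eq_zero_of_hasDerivWithinAt_Iic (HasDerivWithinAt.Iic_of_Iio ?_)
  rw [hasDerivWithinAt_iff_tendsto_slope' self_notMem_Iio]
  have hbound : ∀ᶠ θ in 𝓝[<] Fp p 1,
      0 ≤ slope s (Fp p 1) θ ∧ slope s (Fp p 1) θ ≤ (1 - s θ ^ p) ^ (1 / p) := by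
    filter_upwards [Ioo_mem_nhdsLT (Fp_one_pos hp)] with θ hθ
    exact slope_sinp_Fp_one_le hp hs hθ
  exact tendsto_of_tendsto_of_tendsto_of_le_of_le' tendsto_const_nhds (tendsto_cosp_Fp_one hp hs)
    (hbound.mono fun _ h => h.1) (hbound.mono fun _ h => h.2)

theorem deriv_sinp (hp : 1 < p) (hs : LeftInvOn s (Fp p) (Icc 0 1)) {θ : ℝ}
    (hθ : θ ∈ Ioc 0 (Fp p 1)) : deriv s θ = (1 - s θ ^ p) ^ (1 / p) := by
  rcases hθ.2.lt_or_eq with hθ₁ | rfl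
  · exact (hasDerivAt_sinp hp hs ⟨hθ.1, hθ₁⟩).deriv
  · rw [deriv_sinp_Fp_one hp hs, sinp_Fp_one hs, Real.one_rpow, sub_self,
      Real.zero_rpow (one_div_pos.2 (zero_lt_one.trans hp)).ne']

theorem bijOn_sinp (hp : 1 < p) (hs : LeftInvOn s (Fp p) (Icc 0 1)) :
    BijOn s (Icc 0 (Fp p 1)) (Icc 0 1) := by
  simpa using hs.bijOn_Icc_of_strictMonoOn zero_le_one (strictMonoOn_Fp hp) (continuousOn_Fp hp)

theorem bijOn_sinp_pip_mul (hp : 1 < p) (hs : LeftInvOn s (Fp p) (Icc 0 1)) :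
    BijOn (fun x => s (pip p * x)) (Icc 0 (1 / 2)) (Icc 0 1) :=
  (bijOn_sinp hp hs).comp (bijOn_pip_mul hp)

theorem deriv_sinp_rpow (hp : 1 < p) (hs : LeftInvOn s (Fp p) (Icc 0 1)) {θ : ℝ}
    (hθ : θ ∈ Ioo 0 (Fp p 1)) : deriv s θ ^ p = 1 - s θ ^ p := by
  have hp₀ : 0 < p := zero_lt_one.trans hp
  obtain ⟨hy₀, hy₁⟩ := sinp_mem_Ioo hp hs hθ
  rw [(hasDerivAt_sinp hp hs hθ).deriv,
    ← Real.rpow_mul (one_sub_rpow_pos hp₀ hy₀.le hy₁).le, one_div_mul_cancel hp₀.ne',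
    Real.rpow_one]

end Sinp

/-- `-u_p` as a function of `y = sin_p`, using `cos_p = (1 - sin_p ^ p) ^ (1 / p)`. -/
noncomputable def upProfile (p y : ℝ) : ℝ := y ^ (p - 1) * (1 - y ^ p) ^ ((2 - p) / p)

section upProfile

variable {p y : ℝ}

theorem rpow_mul_cosp_rpow_eq_upProfile (hp : 0 < p) (hy : y ∈ Icc (0:ℝ) 1) :
    y ^ (p - 1) * ((1 - y ^ p) ^ (1 / p)) ^ (2 - p) = upProfile p y := by
  rw [upProfile, ← Real.rpow_mul (sub_nonneg.2 (Real.rpow_le_one hy.1 hy.2 hp.le)),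
    one_div_mul_eq_div]

theorem upProfile_eq_rpow (hp : 0 < p) (hy : y ∈ Icc (0:ℝ) 1) :
    upProfile p y = ((y ^ p) ^ (p - 1) * (1 - y ^ p) ^ (2 - p)) ^ (1 / p) := by
  have hy₀ : 0 ≤ y := hy.1
  have hc : 0 ≤ 1 - y ^ p := sub_nonneg.2 (Real.rpow_le_one hy.1 hy.2 hp.le)
  rw [upProfile, Real.mul_rpow (by positivity) (by positivity), ← Real.rpow_mul hy.1,
    ← Real.rpow_mul hy.1, ← Real.rpow_mul hc]
  congr 2 <;> field_simp

theorem cp_eq_rpow (hp₁ : 1 < p) (hp₂ : p < 2) :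
    cp p = ((p - 1) ^ (p - 1) * (2 - p) ^ (2 - p)) ^ (1 / p) := by
  have h₁ : 0 ≤ p - 1 := by linarith
  have h₂ : 0 ≤ 2 - p := by linarith
  rw [cp, Real.mul_rpow (by positivity) (by positivity), ← Real.rpow_mul h₁,
    ← Real.rpow_mul h₂, mul_one_div, mul_one_div]

theorem rpow_mem_Icc_zero_one (hp : 0 < p) (hy : y ∈ Icc (0:ℝ) 1) : y ^ p ∈ Icc (0:ℝ) 1 :=
  ⟨Real.rpow_nonneg hy.1 p, Real.rpow_le_one hy.1 hy.2 hp.le⟩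

theorem cp_pos (hp₁ : 1 < p) (hp₂ : p < 2) : 0 < cp p :=
  mul_pos (Real.rpow_pos_of_pos (sub_pos.2 hp₁) _) (Real.rpow_pos_of_pos (sub_pos.2 hp₂) _)

theorem upProfile_le_cp (hp₁ : 1 < p) (hp₂ : p < 2) (hy : y ∈ Icc (0:ℝ) 1) :
    upProfile p y ≤ cp p := by
  have hp₀ : 0 < p := zero_lt_one.trans hp₁
  have hy₀ : 0 ≤ y := hy.1
  have hc : 0 ≤ 1 - y ^ p := sub_nonneg.2 (rpow_mem_Icc_zero_one hp₀ hy).2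
  rw [upProfile_eq_rpow hp₀ hy, cp_eq_rpow hp₁ hp₂]
  exact Real.rpow_le_rpow (by positivity) (rpow_mul_one_sub_rpow_le (sub_pos.2 hp₁)
    (sub_pos.2 hp₂) (by ring) (rpow_mem_Icc_zero_one hp₀ hy)) (by positivity)

theorem upProfile_eq_cp_iff (hp₁ : 1 < p) (hp₂ : p < 2) (hy : y ∈ Icc (0:ℝ) 1) :
    upProfile p y = cp p ↔ y ^ p = p - 1 := by
  have hp₀ : 0 < p := zero_lt_one.trans hp₁
  have hy₀ : 0 ≤ y := hy.1
  have hc : 0 ≤ 1 - y ^ p := sub_nonneg.2 (rpow_mem_Icc_zero_one hp₀ hy).2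
  have h₁ : 0 ≤ p - 1 := by linarith
  have h₂ : 0 ≤ 2 - p := by linarith
  rw [upProfile_eq_rpow hp₀ hy, cp_eq_rpow hp₁ hp₂,
    Real.rpow_left_inj (by positivity) (by positivity) (one_div_pos.2 hp₀).ne',
    rpow_mul_one_sub_rpow_eq_iff (sub_pos.2 hp₁) (sub_pos.2 hp₂) (by ring)
      (rpow_mem_Icc_zero_one hp₀ hy)]

theorem upProfile_eq_zero_iff (hp₁ : 1 < p) (hp₂ : p < 2) (hy : y ∈ Icc (0:ℝ) 1) :
    upProfile p y = 0 ↔ y = 0 ∨ y = 1 := by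
  have hp₀ : 0 < p := zero_lt_one.trans hp₁
  have hone : y ^ p = 1 ↔ y = 1 := by simpa using Real.rpow_left_inj hy.1 zero_le_one hp₀.ne'
  rw [upProfile, mul_eq_zero, Real.rpow_eq_zero_iff_of_nonneg hy.1,
    Real.rpow_eq_zero_iff_of_nonneg (sub_nonneg.2 (rpow_mem_Icc_zero_one hp₀ hy).2), sub_eq_zero,
    eq_comm (a := (1:ℝ)), hone]
  simp only [sub_ne_zero.2 hp₁.ne', div_ne_zero (sub_ne_zero.2 hp₂.ne') hp₀.ne', ne_eq,
    not_false_eq_true, and_true]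

end upProfile

section SinpProfile

variable {p : ℝ} {s : ℝ → ℝ}

theorem sinp_rpow_mul_deriv_rpow (hp : 1 < p)
    (hs : LeftInvOn s (Fp p) (Icc 0 1)) {θ : ℝ} (hθ : θ ∈ Icc 0 (Fp p 1)) :
    s θ ^ (p - 1) * deriv s θ ^ (2 - p) = upProfile p (s θ) := by
  rcases hθ.1.eq_or_lt with rfl | hθ₀
  · simp [upProfile, sinp_zero hs, Real.zero_rpow (sub_ne_zero.2 hp.ne'),
      Real.zero_rpow (zero_lt_one.trans hp).ne']
  · rw [deriv_sinp hp hs ⟨hθ₀, hθ.2⟩]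
    exact rpow_mul_cosp_rpow_eq_upProfile (zero_lt_one.trans hp) ((bijOn_sinp hp hs).mapsTo hθ)

theorem upProfile_sinp_pip_mul_eq_zero_iff (hp₁ : 1 < p) (hp₂ : p < 2)
    (hs : LeftInvOn s (Fp p) (Icc 0 1)) {x : ℝ} (hx : x ∈ Icc (0:ℝ) (1 / 2)) :
    upProfile p (s (pip p * x)) = 0 ↔ x = 0 ∨ x = 1 / 2 := by
  have hbij := bijOn_sinp_pip_mul hp₁ hs
  have h₀ := hbij.injOn.eq_iff hx (left_mem_Icc.2 (by norm_num))
  have h₁ := hbij.injOn.eq_iff hx (right_mem_Icc.2 (by norm_num))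
  rw [mul_zero, sinp_zero hs] at h₀
  rw [pip_mul_one_half, sinp_Fp_one hs] at h₁
  rw [upProfile_eq_zero_iff hp₁ hp₂ (hbij.mapsTo hx), h₀, h₁]

theorem exists_sinp_pip_mul_rpow_eq_iff (hp₁ : 1 < p) (hp₂ : p < 2)
    (hs : LeftInvOn s (Fp p) (Icc 0 1)) :
    ∃ m₀ ∈ Ioo (0:ℝ) (1 / 2),
      ∀ x ∈ Icc (0:ℝ) (1 / 2), s (pip p * x) ^ p = p - 1 ↔ x = m₀ := by
  have hp₀ : 0 < p := zero_lt_one.trans hp₁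
  have hbij := bijOn_sinp_pip_mul hp₁ hs
  obtain ⟨m₀, hm₀, hsm₀⟩ := hbij.surjOn
    ⟨Real.rpow_nonneg (sub_nonneg.2 hp₁.le) p⁻¹, Real.rpow_le_one (sub_nonneg.2 hp₁.le)
      (by linarith) (inv_nonneg.2 hp₀.le)⟩
  have hcrit : ∀ x ∈ Icc (0:ℝ) (1 / 2), s (pip p * x) ^ p = p - 1 ↔ x = m₀ :=
    fun x hx => by
      rw [← Real.eq_rpow_inv (hbij.mapsTo hx).1 (sub_nonneg.2 hp₁.le) hp₀.ne', ← hsm₀,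
        hbij.injOn.eq_iff hx hm₀]
  refine ⟨m₀, ⟨hm₀.1.lt_of_ne ?_, hm₀.2.lt_of_ne ?_⟩, hcrit⟩
  · rintro rfl
    have h := (hcrit 0 hm₀).2 rfl
    rw [mul_zero, sinp_zero hs, Real.zero_rpow hp₀.ne'] at h
    linarith
  · rintro rfl
    have h := (hcrit _ hm₀).2 rfl
    rw [pip_mul_one_half, sinp_Fp_one hs, Real.one_rpow] at h
    linarith

end SinpProfile

theorem up_zeros_and_min_general (p : ℝ) (hp1 : 1 < p) (hp2 : p < 2) (s : ℝ → ℝ)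
    (hinv₁ : ∀ y ∈ Icc (0:ℝ) 1, s (Fp p y) = y)
    (u : ℝ → ℝ)
    (hu : ∀ x, u x = -(s (pip p * x) ^ (p - 1) * deriv s (pip p * x) ^ (2 - p))) :
    (∀ x ∈ Icc (0:ℝ) (1/2), (u x = 0 ↔ x = 0 ∨ x = 1/2)) ∧
    IsLeast (u '' Icc (0:ℝ) (1/2)) (-cp p) ∧
    (∃! m, m ∈ Ioo (0:ℝ) (1/2) ∧ deriv s (pip p * m) ^ p = 2 - p) ∧
    (∀ m ∈ Ioo (0:ℝ) (1/2), deriv s (pip p * m) ^ p = 2 - p →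
      ∀ x ∈ Icc (0:ℝ) (1/2), (u x = -cp p ↔ x = m)) := by
  have hbij := bijOn_sinp_pip_mul hp1 hinv₁
  have hu' : ∀ x ∈ Icc (0:ℝ) (1 / 2), u x = -upProfile p (s (pip p * x)) := fun x hx => by
    rw [hu, sinp_rpow_mul_deriv_rpow hp1 hinv₁ ((bijOn_pip_mul hp1).mapsTo hx)]
  obtain ⟨m₀, hm₀, hcrit⟩ := exists_sinp_pip_mul_rpow_eq_iff hp1 hp2 hinv₁
  have hmin : ∀ x ∈ Icc (0:ℝ) (1 / 2), u x = -cp p ↔ x = m₀ := fun x hx => by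
    rw [hu' x hx, neg_inj, upProfile_eq_cp_iff hp1 hp2 (hbij.mapsTo hx), hcrit x hx]
  have hderiv : ∀ m ∈ Ioo (0:ℝ) (1 / 2), deriv s (pip p * m) ^ p = 2 - p ↔ m = m₀ :=
    fun m hm => by
      rw [deriv_sinp_rpow hp1 hinv₁ (pip_mul_mem_Ioo hp1 hm),
        ← hcrit m (Ioo_subset_Icc_self hm)]
      constructor <;> intro h <;> linarith
  have hm₀' := Ioo_subset_Icc_self hm₀
  refine ⟨fun x hx => ?_, ⟨⟨m₀, hm₀', (hmin m₀ hm₀').2 rfl⟩, ?_⟩,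
    ⟨m₀, ⟨hm₀, (hderiv m₀ hm₀).2 rfl⟩, fun m hm => (hderiv m hm.1).1 hm.2⟩, ?_⟩
  · rw [hu' x hx, neg_eq_zero, upProfile_sinp_pip_mul_eq_zero_iff hp1 hp2 hinv₁ hx]
  · rintro _ ⟨x, hx, rfl⟩
    rw [hu' x hx, neg_le_neg_iff]
    exact upProfile_le_cp hp1 hp2 (hbij.mapsTo hx)
  · intro m hm hdm x hx
    rw [(hderiv m hm).1 hdm]
    exact hmin x hx

theorem up_zeros_and_min (p : ℝ) (hp1 : 1 < p) (hp2 : p < 2) (s : ℝ → ℝ)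
    (hinv₁ : ∀ y ∈ Icc (0:ℝ) 1, s (Fp p y) = y)
    (hinv₂ : ∀ x ∈ Icc (0:ℝ) (pip p / 2), Fp p (s x) = x)
    (u : ℝ → ℝ)
    (hu : ∀ x, u x = -(s (pip p * x) ^ (p - 1) * deriv s (pip p * x) ^ (2 - p))) :
    (∀ x ∈ Icc (0:ℝ) (1/2), (u x = 0 ↔ x = 0 ∨ x = 1/2)) ∧
    IsLeast (u '' Icc (0:ℝ) (1/2)) (-cp p) ∧
    (∃! m, m ∈ Ioo (0:ℝ) (1/2) ∧ deriv s (pip p * m) ^ p = 2 - p) ∧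
    (∀ m ∈ Ioo (0:ℝ) (1/2), deriv s (pip p * m) ^ p = 2 - p →
      ∀ x ∈ Icc (0:ℝ) (1/2), (u x = -cp p ↔ x = m)) :=
  up_zeros_and_min_general p hp1 hp2 s hinv₁ u hu
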